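/- arXiv:math/0002083 — 2 statements merged into one kernel-verified Lean document; each statement's English description precedes it below -/
import Mathlib

section
/- Let A be a commutative ring with Poisson bracket and I an involutive ideal, R = A/I. Let φ: I/I² → R be an R-linear map satisfying the cocycle condition φ({f,g}) = {f, φ(g)} + {φ(f), g} (mod I) for all f,g ∈ I (where lifting φ(g) to A is done arbitrarily; the condition is independent of lifts). If I = (f₁,…,f_k), then the ideal Ĩ = (f₁ + εφ(f₁), …, f_k + εφ(f_k)) in A[ε]/(ε²) (with the ε-linearly extended Poisson bracket with {ε,−}=0) satisfies {Ĩ, Ĩ} ⊆ Ĩ. -/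
open TrivSqZeroExt

/-- The `ε`-linear extension of a Poisson bracket on `A` to
`A[ε]/(ε²) = TrivSqZeroExt A A`, with `{ε, -} = 0`. -/
def dualBracket {A : Type*} [CommRing A] (br : A → A → A) :
    TrivSqZeroExt A A → TrivSqZeroExt A A → TrivSqZeroExt A A := fun x y =>
  inl (br x.fst y.fst) + inr (br x.fst y.snd + br x.snd y.fst)

/-- Let `I = (f₁,…,f_k)` be an involutive ideal of a Poisson
ring `A` and `φ : I/I² → A/I` a linear map satisfying the cocycle condition
`φ({f,g}) = {f,φ(g)} + {φ(f),g} (mod I)` (expressed here by a set-theoretic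
lift `φ : A → A` which is linear and well defined modulo `I`).  Then the ideal
`Ĩ = (f₁ + εφ(f₁), …, f_k + εφ(f_k))` of `A[ε]/(ε²)` is involutive for the
`ε`-linearly extended bracket: `{Ĩ, Ĩ} ⊆ Ĩ`. -/
theorem first_order_cocycle_deformation_involutive {A : Type*} [CommRing A]
    (br : A → A → A)
    (hadd_left : ∀ f g h : A, br (f + g) h = br f h + br g h)
    (hadd_right : ∀ f g h : A, br f (g + h) = br f g + br f h)
    (halt : ∀ f : A, br f f = 0)
    (hjacobi : ∀ f g h : A, br f (br g h) + br g (br h f) + br h (br f g) = 0)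
    (hleibniz : ∀ f g h : A, br f (g * h) = br f g * h + g * br f h)
    (k : ℕ) (f : Fin k → A) (I : Ideal A) (hI : I = Ideal.span (Set.range f))
    (hinv : ∀ g ∈ I, ∀ h ∈ I, br g h ∈ I)
    (φ : A → A)
    (hφadd : ∀ g ∈ I, ∀ h ∈ I, φ (g + h) - φ g - φ h ∈ I)
    (hφlin : ∀ a : A, ∀ g ∈ I, φ (a * g) - a * φ g ∈ I)
    (hφsq : ∀ g ∈ I ^ 2, φ g ∈ I)
    (hcocycle : ∀ g ∈ I, ∀ h ∈ I, φ (br g h) - br g (φ h) - br (φ g) h ∈ I) :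
    ∀ x ∈ Ideal.span (Set.range fun i =>
        (inl (f i) + inr (φ (f i)) : TrivSqZeroExt A A)),
      ∀ y ∈ Ideal.span (Set.range fun i =>
        (inl (f i) + inr (φ (f i)) : TrivSqZeroExt A A)),
        dualBracket br x y ∈ Ideal.span (Set.range fun i =>
          (inl (f i) + inr (φ (f i)) : TrivSqZeroExt A A)) := by
  intro x hx y hy
  have hf : ∀ i, f i ∈ I := fun i => hI ▸ Ideal.subset_span ⟨i, rfl⟩
  have hφ0 : φ 0 ∈ I := by
    have h := hφadd 0 I.zero_mem 0 I.zero_mem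
    rw [zero_add] at h
    simpa using I.neg_mem h
  -- sums: `φ (∑ cᵢ fᵢ) ≡ ∑ cᵢ φ(fᵢ)  mod I`
  have hsum : ∀ (s : Finset (Fin k)) (c : Fin k → A),
      φ (∑ i ∈ s, c i * f i) - ∑ i ∈ s, c i * φ (f i) ∈ I := by
    intro s c
    induction s using Finset.induction_on with
    | empty => simpa using hφ0
    | @insert a s ha ih =>
      rw [Finset.sum_insert ha, Finset.sum_insert ha]
      have hmem : ∑ i ∈ s, c i * f i ∈ I :=
        Ideal.sum_mem I fun i _ => I.mul_mem_left _ (hf i)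
      have h1 := hφadd (c a * f a) (I.mul_mem_left _ (hf a)) _ hmem
      have h2 := hφlin (c a) (f a) (hf a)
      have e : φ (c a * f a + ∑ i ∈ s, c i * f i)
            - (c a * φ (f a) + ∑ i ∈ s, c i * φ (f i))
          = (φ (c a * f a + ∑ i ∈ s, c i * f i) - φ (c a * f a)
              - φ (∑ i ∈ s, c i * f i))
            + (φ (c a * f a) - c a * φ (f a))
            + (φ (∑ i ∈ s, c i * f i) - ∑ i ∈ s, c i * φ (f i)) := by ring
      rw [e]
      exact add_mem (add_mem h1 h2) ih
  -- forward: elements of Ĩ have first component in I and second ≡ φ(first) mod I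
  have key : ∀ z : TrivSqZeroExt A A,
      z ∈ Ideal.span (Set.range fun i =>
        (inl (f i) + inr (φ (f i)) : TrivSqZeroExt A A)) →
      z.fst ∈ I ∧ z.snd - φ z.fst ∈ I := by
    intro z hz
    induction hz using Submodule.span_induction with
    | mem w hw =>
      obtain ⟨i, rfl⟩ := hw
      constructor
      · simpa using hf i
      · simp
    | zero =>
      refine ⟨I.zero_mem, ?_⟩
      simpa using I.neg_mem hφ0
    | add u v hu hv ihu ihv =>
      obtain ⟨hu1, hu2⟩ := ihu
      obtain ⟨hv1, hv2⟩ := ihv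
      refine ⟨by simpa using I.add_mem hu1 hv1, ?_⟩
      have h := hφadd u.fst hu1 v.fst hv1
      have e : (u + v).snd - φ ((u + v).fst)
          = (u.snd - φ u.fst) + (v.snd - φ v.fst)
            - (φ (u.fst + v.fst) - φ u.fst - φ v.fst) := by
        simp only [snd_add, fst_add]; ring
      rw [e]
      exact sub_mem (add_mem hu2 hv2) h
    | smul a u hu ihu =>
      obtain ⟨hu1, hu2⟩ := ihu
      refine ⟨by simpa [smul_eq_mul] using I.mul_mem_left a.fst hu1, ?_⟩
      have h := hφlin a.fst u.fst hu1
      have e : (a • u).snd - φ ((a • u).fst)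
          = a.fst * (u.snd - φ u.fst) + a.snd * u.fst
            - (φ (a.fst * u.fst) - a.fst * φ u.fst) := by
        simp only [smul_eq_mul, snd_mul, fst_mul, op_smul_eq_smul, smul_eq_mul]
        ring
      rw [e]
      exact sub_mem (I.add_mem (I.mul_mem_left _ hu2) (I.mul_mem_left a.snd hu1)) h
  -- `inr` of any element of I lies in Ĩ
  have hinr : ∀ h ∈ I, (inr h : TrivSqZeroExt A A) ∈
      Ideal.span (Set.range fun i =>
        (inl (f i) + inr (φ (f i)) : TrivSqZeroExt A A)) := by
    intro h hh
    rw [hI] at hh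
    have hh' : h ∈ Submodule.span A (Set.range f) := hh
    rw [Submodule.mem_span_range_iff_exists_fun] at hh'
    obtain ⟨c, hc⟩ := hh'
    have e : (inr h : TrivSqZeroExt A A)
        = ∑ i, (inr (c i) : TrivSqZeroExt A A) * (inl (f i) + inr (φ (f i))) := by
      have : ∀ i, (inr (c i) : TrivSqZeroExt A A) * (inl (f i) + inr (φ (f i)))
          = inr (c i * f i) := by
        intro i
        rw [mul_add, inr_mul_inl, inr_mul_inr, add_zero, op_smul_eq_smul,
          smul_eq_mul, mul_comm]
      rw [Finset.sum_congr rfl fun i _ => this i]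
      ext
      · simp [fst_sum]
      · simp [snd_sum, ← hc, smul_eq_mul]
    rw [e]
    exact Ideal.sum_mem _ fun i _ =>
      Ideal.mul_mem_left _ _ (Ideal.subset_span ⟨i, rfl⟩)
  -- backward: the characterization implies membership in Ĩ
  have key2 : ∀ z : TrivSqZeroExt A A, z.fst ∈ I → z.snd - φ z.fst ∈ I →
      z ∈ Ideal.span (Set.range fun i =>
        (inl (f i) + inr (φ (f i)) : TrivSqZeroExt A A)) := by
    intro z hz1 hz2
    have hz1' := hz1
    rw [hI] at hz1'
    have hz1'' : z.fst ∈ Submodule.span A (Set.range f) := hz1'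
    rw [Submodule.mem_span_range_iff_exists_fun] at hz1''
    obtain ⟨c, hc⟩ := hz1''
    simp only [smul_eq_mul] at hc
    set w : TrivSqZeroExt A A :=
      ∑ i, (inl (c i) : TrivSqZeroExt A A) * (inl (f i) + inr (φ (f i))) with hw
    have hwmem : w ∈ Ideal.span (Set.range fun i =>
        (inl (f i) + inr (φ (f i)) : TrivSqZeroExt A A)) :=
      Ideal.sum_mem _ fun i _ =>
        Ideal.mul_mem_left _ _ (Ideal.subset_span ⟨i, rfl⟩)
    have hwfst : w.fst = z.fst := by
      rw [hw, fst_sum, ← hc]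
      exact Finset.sum_congr rfl fun i _ => by simp
    have hwsnd : w.snd = ∑ i, c i * φ (f i) := by
      rw [hw, snd_sum]
      exact Finset.sum_congr rfl fun i _ => by simp
    have hrest : z.snd - w.snd ∈ I := by
      have h1 : φ z.fst - ∑ i, c i * φ (f i) ∈ I := by
        have := hsum Finset.univ c
        rwa [hc] at this
      have e : z.snd - w.snd = (z.snd - φ z.fst)
          + (φ z.fst - ∑ i, c i * φ (f i)) := by rw [hwsnd]; ring
      rw [e]
      exact I.add_mem hz2 h1
    have e : z = w + inr (z.snd - w.snd) := by
      ext
      · simp [hwfst]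
      · simp
    rw [e]
    exact Ideal.add_mem _ hwmem (hinr _ hrest)
  -- now the main computation
  obtain ⟨hx1, hx2⟩ := key x hx
  obtain ⟨hy1, hy2⟩ := key y hy
  have hfst : (dualBracket br x y).fst = br x.fst y.fst := by
    simp [dualBracket]
  have hsnd : (dualBracket br x y).snd = br x.fst y.snd + br x.snd y.fst := by
    simp [dualBracket]
  apply key2
  · rw [hfst]; exact hinv _ hx1 _ hy1
  · rw [hfst, hsnd]
    have h1 : br x.fst (y.snd - φ y.fst) ∈ I := hinv _ hx1 _ hy2
    have h2 : br (x.snd - φ x.fst) y.fst ∈ I := hinv _ hx2 _ hy1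
    have h3 := hcocycle x.fst hx1 y.fst hy1
    have e1 : br x.fst y.snd
        = br x.fst (φ y.fst) + br x.fst (y.snd - φ y.fst) := by
      rw [← hadd_right]; congr 1; ring
    have e2 : br x.snd y.fst
        = br (φ x.fst) y.fst + br (x.snd - φ x.fst) y.fst := by
      rw [← hadd_left]; congr 1; ring
    rw [e1, e2]
    have e : br x.fst (φ y.fst) + br x.fst (y.snd - φ y.fst)
          + (br (φ x.fst) y.fst + br (x.snd - φ x.fst) y.fst)
          - φ (br x.fst y.fst)
        = br x.fst (y.snd - φ y.fst) + br (x.snd - φ x.fst) y.fst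
          - (φ (br x.fst y.fst) - br x.fst (φ y.fst) - br (φ x.fst) y.fst) := by
      ring
    rw [e]
    exact sub_mem (add_mem h1 h2) h3
end

section
/- The three polynomials f₁ = −27B²C + 96AC² − 45ABD + 1125D², f₂ = 81B³ − 288ABC + 405A²D − 900CD, f₃ = −45AB² + 135A²C − 300C² + 1125BD in K[A,B,C,D] are, up to sign/scalar, the 2×2 minors of the 3×2 matrix with rows (9D, 9B² − 32AC), (3C, −5AB + 125D), (−9B, 45A² − 100C); precisely, each 2×2 minor of this matrix lies in the ideal (f₁,f₂,f₃) and conversely each fᵢ is a K-linear combination of the three 2×2 minors. -/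
open MvPolynomial

noncomputable section

variable {K : Type*} [Field K] [CharZero K]

local notation "A" => (X 0 : MvPolynomial (Fin 4) K)
local notation "B" => (X 1 : MvPolynomial (Fin 4) K)
local notation "Cc" => (X 2 : MvPolynomial (Fin 4) K)
local notation "D" => (X 3 : MvPolynomial (Fin 4) K)

def stf₁ : MvPolynomial (Fin 4) K :=
  -27 * B ^ 2 * Cc + 96 * A * Cc ^ 2 - 45 * A * B * D + 1125 * D ^ 2

def stf₂ : MvPolynomial (Fin 4) K :=
  81 * B ^ 3 - 288 * A * B * Cc + 405 * A ^ 2 * D - 900 * Cc * D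

def stf₃ : MvPolynomial (Fin 4) K :=
  -45 * A * B ^ 2 + 135 * A ^ 2 * Cc - 300 * Cc ^ 2 + 1125 * B * D

/-- the 2×2 minor of the matrix with rows `(9D, 9B²−32AC)`, `(3C, −5AB+125D)`,
`(−9B, 45A²−100C)` obtained by deleting the first row -/
def stm₁ : MvPolynomial (Fin 4) K :=
  3 * Cc * (45 * A ^ 2 - 100 * Cc) - (-9 * B) * (-5 * A * B + 125 * D)

/-- the minor obtained by deleting the second row -/
def stm₂ : MvPolynomial (Fin 4) K :=
  9 * D * (45 * A ^ 2 - 100 * Cc) - (-9 * B) * (9 * B ^ 2 - 32 * A * Cc)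

/-- the minor obtained by deleting the third row -/
def stm₃ : MvPolynomial (Fin 4) K :=
  9 * D * (-5 * A * B + 125 * D) - 3 * Cc * (9 * B ^ 2 - 32 * A * Cc)


lemma stm₁_eq : (stm₁ : MvPolynomial (Fin 4) K) = stf₃ := by
  unfold stm₁ stf₃; ring

lemma stm₂_eq : (stm₂ : MvPolynomial (Fin 4) K) = stf₂ := by
  unfold stm₂ stf₂; ring

lemma stm₃_eq : (stm₃ : MvPolynomial (Fin 4) K) = stf₁ := by
  unfold stm₃ stf₁; ring

/-- The three polynomials `f₁, f₂, f₃` defining the open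
swallowtail are, up to scalars, the 2×2 minors of the 3×2 matrix with rows
`(9D, 9B²−32AC)`, `(3C, −5AB+125D)`, `(−9B, 45A²−100C)`: each minor lies in the
ideal `(f₁,f₂,f₃)` and each `fᵢ` is a `K`-linear combination of the minors. -/
theorem swallowtail_determinantal :
    ((stm₁ : MvPolynomial (Fin 4) K) ∈ Ideal.span {(stf₁ : MvPolynomial (Fin 4) K), stf₂, stf₃} ∧
     (stm₂ : MvPolynomial (Fin 4) K) ∈ Ideal.span {(stf₁ : MvPolynomial (Fin 4) K), stf₂, stf₃} ∧
     (stm₃ : MvPolynomial (Fin 4) K) ∈ Ideal.span {(stf₁ : MvPolynomial (Fin 4) K), stf₂, stf₃}) ∧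
    (∃ c₁ c₂ c₃ : K, (stf₁ : MvPolynomial (Fin 4) K) = C c₁ * stm₁ + C c₂ * stm₂ + C c₃ * stm₃) ∧
    (∃ c₁ c₂ c₃ : K, (stf₂ : MvPolynomial (Fin 4) K) = C c₁ * stm₁ + C c₂ * stm₂ + C c₃ * stm₃) ∧
    (∃ c₁ c₂ c₃ : K, (stf₃ : MvPolynomial (Fin 4) K) = C c₁ * stm₁ + C c₂ * stm₂ + C c₃ * stm₃) := by
  refine ⟨⟨?_, ?_, ?_⟩, ⟨0, 0, 1, ?_⟩, ⟨0, 1, 0, ?_⟩, ⟨1, 0, 0, ?_⟩⟩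
  · rw [stm₁_eq]
    exact Ideal.subset_span (by simp)
  · rw [stm₂_eq]
    exact Ideal.subset_span (by simp)
  · rw [stm₃_eq]
    exact Ideal.subset_span (by simp)
  · simp [stm₃_eq]
  · simp [stm₂_eq]
  · simp [stm₁_eq]

end
end
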